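/- arXiv:1904.13388 — 3 statements merged into one kernel-verified Lean document; each statement's English description precedes it below -/
import Mathlib

section
/- Let Q be a quandle and a ∈ Q. Then the σ_Q-class [a] = {b ∈ Q : Dis(Q)_b = Dis(Q)_a} is a subquandle of Q; this subquandle, with the restricted operation, is a semiregular quandle; and for every automorphism h of Q and every b ∈ Q, if b σ_Q a then h(b) σ_Q h(a) (so automorphisms of Q permute the σ_Q-classes). -/
universe u v

/-- A quandle structure on a type `Q`: each left multiplication `L a : b ↦ op a b`
is a bijection (with inverse `invOp a`), the operation is left self-distributive,
and every element is idempotent. -/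
structure QuandleStr (Q : Type u) where
  op : Q → Q → Q
  invOp : Q → Q → Q
  inv_op : ∀ a b, invOp a (op a b) = b
  op_inv : ∀ a b, op a (invOp a b) = b
  self_distrib : ∀ a b c, op a (op b c) = op (op a b) (op a c)
  op_self : ∀ a, op a a = a

namespace QuandleStr

variable {Q : Type u} (S : QuandleStr Q)

/-- Left multiplication as a permutation of `Q`. -/
def L (a : Q) : Equiv.Perm Q where
  toFun := S.op a
  invFun := S.invOp a
  left_inv := S.inv_op a
  right_inv := S.op_inv a

/-- The left multiplication group `LMlt(Q)`. -/
def LMlt : Subgroup (Equiv.Perm Q) := Subgroup.closure (Set.range S.L)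

/-- The displacement group `Dis(Q)`, generated by `L a * (L b)⁻¹`. -/
def Dis : Subgroup (Equiv.Perm Q) :=
  Subgroup.closure { g : Equiv.Perm Q | ∃ a b : Q, g = S.L a * (S.L b)⁻¹ }

/-- `Q` is connected if `Dis(Q)` acts transitively. -/
def IsConnected : Prop := ∀ a b : Q, ∃ g ∈ S.Dis, g a = b

/-- `Q` is semiregular if the stabilizer in `Dis(Q)` of every point is trivial. -/
def IsSemiregular : Prop := ∀ g ∈ S.Dis, ∀ x : Q, g x = x → g = 1

/-- `Q` is faithful if `a ↦ L a` is injective. -/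
def IsFaithful : Prop := ∀ a b : Q, (∀ c : Q, S.op a c = S.op b c) → a = b

/-- `Q` is latin if every right multiplication is bijective. -/
def IsLatin : Prop := ∀ a : Q, Function.Bijective (fun b => S.op b a)

/-- `Q` is a crossed set if `a*b = b` implies `b*a = a`. -/
def IsCrossedSet : Prop := ∀ a b : Q, S.op a b = b → S.op b a = a

/-- A subquandle: a nonempty subset closed under the operation and left division. -/
def IsSubquandle (A : Set Q) : Prop :=
  A.Nonempty ∧ (∀ a ∈ A, ∀ b ∈ A, S.op a b ∈ A) ∧ (∀ a ∈ A, ∀ b ∈ A, S.invOp a b ∈ A)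

/-- The automorphism group of the quandle, as a subgroup of `Equiv.Perm Q`. -/
def autGroup : Subgroup (Equiv.Perm Q) where
  carrier := { h : Equiv.Perm Q | ∀ a b : Q, h (S.op a b) = S.op (h a) (h b) }
  one_mem' := by intro a b; rfl
  mul_mem' := by
    intro g h hg hh a b
    show g (h (S.op a b)) = S.op (g (h a)) (g (h b))
    rw [hh, hg]
  inv_mem' := by
    intro g hg a b
    apply g.injective
    rw [hg]
    simp

/-- `Q` is doubly homogeneous if `Aut(Q)` acts 2-transitively. -/
def IsDoublyHomogeneous : Prop :=
  ∀ a b c d : Q, a ≠ b → c ≠ d → ∃ h ∈ S.autGroup, h a = c ∧ h b = d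

/-- The restriction of the quandle structure to a subset closed under both operations. -/
def restrict (A : Set Q) (h1 : ∀ a ∈ A, ∀ b ∈ A, S.op a b ∈ A)
    (h2 : ∀ a ∈ A, ∀ b ∈ A, S.invOp a b ∈ A) : QuandleStr A where
  op a b := ⟨S.op a b, h1 a a.2 b b.2⟩
  invOp a b := ⟨S.invOp a b, h2 a a.2 b b.2⟩
  inv_op a b := Subtype.ext (S.inv_op a b)
  op_inv a b := Subtype.ext (S.op_inv a b)
  self_distrib a b c := Subtype.ext (S.self_distrib a b c)
  op_self a := Subtype.ext (S.op_self a)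

/-- The stabilizer of a point in the displacement group, as a set of permutations. -/
def disStab (x : Q) : Set (Equiv.Perm Q) := { g : Equiv.Perm Q | g ∈ S.Dis ∧ g x = x }

/-- The class of `a` under the relation `σ_Q`: elements with the same stabilizer in `Dis(Q)`. -/
def sigmaClass (a : Q) : Set Q := { b : Q | S.disStab b = S.disStab a }

/-- A quandle is strictly simple if it has at least two elements and no proper subquandle. -/
def IsStrictlySimple : Prop :=
  (∃ a b : Q, a ≠ b) ∧
    ∀ A : Set Q, S.IsSubquandle A → (∀ a ∈ A, ∀ b ∈ A, a = b) ∨ A = Set.univ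

/-- A subset which is a strictly simple subquandle (with the restricted operation). -/
def IsStrictlySimpleSub (A : Set Q) : Prop :=
  S.IsSubquandle A ∧ (∃ a ∈ A, ∃ b ∈ A, a ≠ b) ∧
    ∀ B : Set Q, B ⊆ A → S.IsSubquandle B → (∀ x ∈ B, ∀ y ∈ B, x = y) ∨ B = A

/-- A congruence of a quandle. -/
structure IsCongruence (r : Q → Q → Prop) : Prop where
  refl : ∀ a, r a a
  symm : ∀ {a b}, r a b → r b a
  trans : ∀ {a b c}, r a b → r b c → r a c
  op_compat : ∀ {a b c d}, r a b → r c d → r (S.op a c) (S.op b d)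
  invOp_compat : ∀ {a b c d}, r a b → r c d → r (S.invOp a c) (S.invOp b d)

/-- A quandle is simple if it has at least two elements and its only congruences are
the equality relation and the all relation. -/
def IsSimple : Prop :=
  (∃ a b : Q, a ≠ b) ∧
    ∀ r : Q → Q → Prop, S.IsCongruence r → (∀ a b, r a b ↔ a = b) ∨ (∀ a b, r a b)

end QuandleStr

/-- The product of a family of quandles, with componentwise operation. -/
def piQuandle {I : Type u} {Q : I → Type v} (S : ∀ i, QuandleStr (Q i)) :
    QuandleStr (∀ i, Q i) where
  op a b := fun i => (S i).op (a i) (b i)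
  invOp a b := fun i => (S i).invOp (a i) (b i)
  inv_op a b := funext fun i => (S i).inv_op (a i) (b i)
  op_inv a b := funext fun i => (S i).op_inv (a i) (b i)
  self_distrib a b c := funext fun i => (S i).self_distrib (a i) (b i) (c i)
  op_self a := funext fun i => (S i).op_self (a i)

/-- The principal quandle `Q_Hom(G, f)` over a group `G` with automorphism `f`:
the underlying set is `G` with `a * b = a · f(a⁻¹ b)`. -/
def principalQuandle {G : Type u} [Group G] (f : G ≃* G) : QuandleStr G where
  op a b := a * f (a⁻¹ * b)
  invOp a b := a * f.symm (a⁻¹ * b)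
  inv_op a b := by simp
  op_inv a b := by simp
  self_distrib a b c := by
    simp only [map_mul, map_inv, mul_inv_rev, mul_assoc, inv_mul_cancel_left,
      mul_inv_cancel_left, inv_inv]
  op_self a := by simp

/-- The affine quandle `Aff(A, f)` over an abelian group `A` with automorphism `f`:
the underlying set is `A` with `a * b = a - f a + f b`. -/
def affineQuandle {A : Type u} [AddCommGroup A] (f : A ≃+ A) : QuandleStr A where
  op a b := a - f a + f b
  invOp a b := f.symm (b - a + f a)
  inv_op a b := by
    try dsimp only
    have h : (a - f a + f b) - a + f a = f b := by abel
    rw [h, f.symm_apply_apply]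
  op_inv a b := by
    try dsimp only
    rw [f.apply_symm_apply]
    abel
  self_distrib a b c := by
    try dsimp only
    simp only [map_add, map_sub]
    abel
  op_self a := by
    try dsimp only
    rw [sub_add_cancel]

/-- A witness that a quandle is principal: a group `G`, an automorphism `f`, and a
quandle isomorphism with `Q_Hom(G, f)`. -/
structure PrincipalWitness {Q : Type u} (S : QuandleStr Q) : Type (u + 1) where
  G : Type u
  [grp : Group G]
  f : G ≃* G
  e : Q ≃ G
  hop : ∀ a b : Q, e (S.op a b) = (principalQuandle f).op (e a) (e b)

/-- A quandle is principal if it is isomorphic to some `Q_Hom(G, f)`. -/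
def IsPrincipal {Q : Type u} (S : QuandleStr Q) : Prop := Nonempty (PrincipalWitness S)

/-! Every left multiplication `L x` is an automorphism, and conjugation by an automorphism `h`
maps the generators `L b * (L c)⁻¹` of `Dis(Q)` to `L (h b) * (L (h c))⁻¹`. Hence `h` normalizes
`Dis(Q)` and carries `Dis(Q)_x` onto `Dis(Q)_{h x}`, so automorphisms permute the `σ_Q`-classes;
applied to `L x` and `(L x)⁻¹`, which fix `x`, this closes each class under both operations.
Every displacement of a subquandle `A` is the restriction of a displacement of `Q`, so if all
points of `A` share one stabilizer, a displacement of `A` fixing one point fixes all of `A`. -/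

namespace QuandleStr

variable {Q : Type u} (S : QuandleStr Q)

@[simp] lemma L_apply (a b : Q) : S.L a b = S.op a b := rfl

lemma invOp_self (x : Q) : S.invOp x x = x := by
  simpa only [S.op_self] using S.inv_op x x

lemma L_mem_autGroup (x : Q) : S.L x ∈ S.autGroup := S.self_distrib x

variable {S}

lemma conj_L_of_mem_autGroup {h : Equiv.Perm Q} (hh : h ∈ S.autGroup) (c : Q) :
    h * S.L c * h⁻¹ = S.L (h c) := by
  ext e
  simp only [Equiv.Perm.mul_apply, L_apply, hh c, Equiv.Perm.coe_inv, Equiv.apply_symm_apply]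

lemma conj_mem_Dis_of_mem_autGroup {h g : Equiv.Perm Q} (hh : h ∈ S.autGroup)
    (hg : g ∈ S.Dis) : h * g * h⁻¹ ∈ S.Dis := by
  have hle : S.Dis ≤ S.Dis.comap (MulAut.conj h).toMonoidHom := by
    rw [Dis, Subgroup.closure_le]
    rintro _ ⟨b, c, rfl⟩
    have hconj : MulAut.conj h (S.L b * (S.L c)⁻¹) = S.L (h b) * (S.L (h c))⁻¹ := by
      rw [map_mul, map_inv, MulAut.conj_apply, MulAut.conj_apply,
        conj_L_of_mem_autGroup hh, conj_L_of_mem_autGroup hh]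
    show MulAut.conj h (S.L b * (S.L c)⁻¹) ∈ S.Dis
    rw [hconj]
    exact Subgroup.subset_closure ⟨h b, h c, rfl⟩
  exact hle hg

lemma mem_disStab_apply_iff {h : Equiv.Perm Q} (hh : h ∈ S.autGroup) (x : Q)
    (g : Equiv.Perm Q) : g ∈ S.disStab (h x) ↔ h⁻¹ * g * h ∈ S.disStab x := by
  have hDis : g ∈ S.Dis ↔ h⁻¹ * g * h ∈ S.Dis := by
    refine ⟨fun hg => ?_, fun hg => ?_⟩
    · simpa only [inv_inv] using conj_mem_Dis_of_mem_autGroup (inv_mem hh) hg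
    · simpa only [mul_assoc, mul_inv_cancel_left, mul_inv_cancel, mul_one] using
        conj_mem_Dis_of_mem_autGroup hh hg
  have hfix : g (h x) = h x ↔ (h⁻¹ * g * h) x = x := by
    rw [Equiv.Perm.mul_apply, Equiv.Perm.mul_apply, Equiv.Perm.inv_eq_iff_eq]
  exact and_congr hDis hfix

lemma disStab_apply_eq_of_mem_autGroup {h : Equiv.Perm Q} (hh : h ∈ S.autGroup) {x y : Q}
    (hxy : S.disStab x = S.disStab y) : S.disStab (h x) = S.disStab (h y) := by
  ext g
  rw [mem_disStab_apply_iff hh, mem_disStab_apply_iff hh, hxy]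

lemma apply_mem_sigmaClass_apply {h : Equiv.Perm Q} (hh : h ∈ S.autGroup) {a b : Q}
    (hb : b ∈ S.sigmaClass a) : h b ∈ S.sigmaClass (h a) :=
  disStab_apply_eq_of_mem_autGroup hh hb

lemma apply_mem_sigmaClass_of_fixed {h : Equiv.Perm Q} (hh : h ∈ S.autGroup) {a x y : Q}
    (hfix : h x = x) (hx : x ∈ S.sigmaClass a) (hy : y ∈ S.sigmaClass a) :
    h y ∈ S.sigmaClass a := by
  have hyx : y ∈ S.sigmaClass x := hy.trans hx.symm
  have := apply_mem_sigmaClass_apply hh hyx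
  rw [hfix] at this
  exact this.trans hx

variable (S)

lemma isSubquandle_sigmaClass (a : Q) : S.IsSubquandle (S.sigmaClass a) :=
  ⟨⟨a, rfl⟩,
    fun _ hx _ hy => apply_mem_sigmaClass_of_fixed (S.L_mem_autGroup _) (S.op_self _) hx hy,
    fun _ hx _ hy =>
      apply_mem_sigmaClass_of_fixed (inv_mem (S.L_mem_autGroup _)) (S.invOp_self _) hx hy⟩

variable {S}

lemma exists_mem_Dis_extending {A : Set Q} (h1 : ∀ a ∈ A, ∀ b ∈ A, S.op a b ∈ A)
    (h2 : ∀ a ∈ A, ∀ b ∈ A, S.invOp a b ∈ A) {g : Equiv.Perm A}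
    (hg : g ∈ (S.restrict A h1 h2).Dis) : ∃ g' ∈ S.Dis, ∀ y : A, g' y = g y := by
  induction hg using Subgroup.closure_induction with
  | mem _ hp =>
    obtain ⟨u, v, rfl⟩ := hp
    exact ⟨S.L u * (S.L v)⁻¹, Subgroup.subset_closure ⟨u, v, rfl⟩, fun _ => rfl⟩
  | one => exact ⟨1, one_mem _, fun _ => rfl⟩
  | mul p q _ _ hp hq =>
    obtain ⟨p', hp'D, hp'⟩ := hp
    obtain ⟨q', hq'D, hq'⟩ := hq
    refine ⟨p' * q', mul_mem hp'D hq'D, fun y => ?_⟩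
    rw [Equiv.Perm.mul_apply, hq', hp', Equiv.Perm.mul_apply]
  | inv p _ hp =>
    obtain ⟨p', hp'D, hp'⟩ := hp
    refine ⟨p'⁻¹, inv_mem hp'D, fun y => ?_⟩
    rw [Equiv.Perm.inv_eq_iff_eq, hp', Equiv.Perm.coe_inv, Equiv.apply_symm_apply]

lemma isSemiregular_restrict_of_subset_sigmaClass {A : Set Q}
    (h1 : ∀ a ∈ A, ∀ b ∈ A, S.op a b ∈ A) (h2 : ∀ a ∈ A, ∀ b ∈ A, S.invOp a b ∈ A) {a : Q}
    (hA : A ⊆ S.sigmaClass a) : (S.restrict A h1 h2).IsSemiregular := by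
  intro g hg x hgx
  obtain ⟨g', hg'D, hg'⟩ := exists_mem_Dis_extending h1 h2 hg
  have hstab : g' ∈ S.disStab a := by
    rw [← hA x.2]
    exact ⟨hg'D, by rw [hg', hgx]⟩
  ext y
  rw [← hg', Equiv.Perm.one_apply]
  exact (hA y.2 ▸ hstab).2

end QuandleStr

/-- The `σ_Q`-class of `a` is a subquandle of `Q`; with the restricted
operation it is a semiregular quandle; and every automorphism of `Q` maps the
`σ_Q`-class of `a` into the `σ_Q`-class of `h a`. -/
theorem statement1 {Q : Type u} (S : QuandleStr Q) (a : Q) :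
    S.IsSubquandle (S.sigmaClass a) ∧
    (∀ (h1 : ∀ x ∈ S.sigmaClass a, ∀ y ∈ S.sigmaClass a, S.op x y ∈ S.sigmaClass a)
       (h2 : ∀ x ∈ S.sigmaClass a, ∀ y ∈ S.sigmaClass a, S.invOp x y ∈ S.sigmaClass a),
       (S.restrict (S.sigmaClass a) h1 h2).IsSemiregular) ∧
    (∀ h ∈ S.autGroup, ∀ b : Q, b ∈ S.sigmaClass a → h b ∈ S.sigmaClass (h a)) :=
  ⟨S.isSubquandle_sigmaClass a,
    fun h1 h2 => QuandleStr.isSemiregular_restrict_of_subset_sigmaClass h1 h2 subset_rfl,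
    fun _ hh _ hb => QuandleStr.apply_mem_sigmaClass_apply hh hb⟩
end

section
/- Let Q = Q_Hom(G,f) be a principal quandle. For a subgroup N ≤ G, let ∼_N be the relation a ∼_N b iff a⁻¹b ∈ N, let [N,f] be the subgroup of G generated by {n·f(n)⁻¹ : n ∈ N}, and let Core_G(N) be the largest normal subgroup of G contained in N. If f(N) = N and [N,f] ≤ Core_G(N), then ∼_N is a congruence of Q. Conversely, if Q is connected, then every congruence of Q equals ∼_N for some subgroup N ≤ G with f(N) = N and [N,f] ≤ Core_G(N). -/
universe u v

/-! A congruence of any quandle is invariant under `Dis(Q)`. In `Q_Hom(G, f)` the generator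
`L_a L_b⁻¹` is the left translation by `a f(a⁻¹b) b⁻¹`, so `Dis(Q)` consists of left translations,
and when `Q` is connected it contains all of them. A left-invariant equivalence relation on `G` is
`∼_N` for `N` the class of `1`. Finally, `∼_N` is a congruence exactly when `f(N) = N` and
`[N, f] ≤ Core_G(N)`: writing `a ▷ c = a f(a⁻¹c)` and `m = a⁻¹b`,
`(a ▷ c)⁻¹ (b ▷ d) = f(a⁻¹c)⁻¹ (m f(m)⁻¹) f(a⁻¹c) · f(c⁻¹d)`. -/

namespace QuandleStr.IsCongruence

variable {Q : Type u} {S : QuandleStr Q} {r : Q → Q → Prop}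

theorem equivalence (hr : S.IsCongruence r) : Equivalence r :=
  ⟨hr.refl, hr.symm, hr.trans⟩

theorem op_left_iff (hr : S.IsCongruence r) (a x y : Q) :
    r (S.op a x) (S.op a y) ↔ r x y := by
  refine ⟨fun h => ?_, hr.op_compat (hr.refl a)⟩
  simpa only [S.inv_op] using hr.invOp_compat (hr.refl a) h

theorem invOp_left_iff (hr : S.IsCongruence r) (a x y : Q) :
    r (S.invOp a x) (S.invOp a y) ↔ r x y := by
  rw [← hr.op_left_iff a, S.op_inv, S.op_inv]

theorem apply_iff_of_mem_Dis (hr : S.IsCongruence r) {g : Equiv.Perm Q} (hg : g ∈ S.Dis)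
    (x y : Q) : r (g x) (g y) ↔ r x y := by
  induction hg using Subgroup.closure_induction generalizing x y with
  | mem g hg =>
    obtain ⟨a, b, rfl⟩ := hg
    exact (hr.op_left_iff a _ _).trans (hr.invOp_left_iff b x y)
  | one => rfl
  | mul g h _ _ hg hh => exact (hg _ _).trans (hh x y)
  | inv g _ hg => simpa using (hg (g⁻¹ x) (g⁻¹ y)).symm

end QuandleStr.IsCongruence

theorem Subgroup.exists_forall_iff_inv_mul_mem {G : Type u} [Group G] {r : G → G → Prop}
    (hr : Equivalence r) (hl : ∀ g x y, r x y → r (g * x) (g * y)) :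
    ∃ N : Subgroup G, ∀ a b, r a b ↔ a⁻¹ * b ∈ N := by
  have hone : ∀ a b, r a b ↔ r 1 (a⁻¹ * b) := fun a b =>
    ⟨fun h => by simpa using hl a⁻¹ a b h, fun h => by simpa using hl a 1 (a⁻¹ * b) h⟩
  refine ⟨{ carrier := {x | r 1 x}
            one_mem' := hr.refl 1
            mul_mem' := fun {x y} hx hy => hr.trans hx ((hone x (x * y)).2 (by simpa using hy))
            inv_mem' := fun {x} hx => hr.symm ((hone x⁻¹ 1).2 (by simpa using hx)) },
    fun a b => hone a b⟩

namespace principalQuandle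

variable {G : Type u} [Group G] (f : G ≃* G)

theorem invOp_eq : (principalQuandle f).invOp = (principalQuandle f.symm).op := rfl

theorem L_mul_L_inv (a b : G) :
    (principalQuandle f).L a * ((principalQuandle f).L b)⁻¹ =
      MulAction.toPerm (a * f (a⁻¹ * b) * b⁻¹) := by
  ext x
  change a * f (a⁻¹ * (b * f.symm (b⁻¹ * x))) = a * f (a⁻¹ * b) * b⁻¹ * x
  simp only [map_mul, MulEquiv.apply_symm_apply]
  group

theorem Dis_le_range_toPermHom : (principalQuandle f).Dis ≤ (MulAction.toPermHom G G).range := by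
  refine (Subgroup.closure_le _).2 ?_
  rintro _ ⟨a, b, rfl⟩
  exact ⟨_, (L_mul_L_inv f a b).symm⟩

variable {f}

theorem toPerm_mem_Dis (hconn : (principalQuandle f).IsConnected) (g : G) :
    MulAction.toPerm g ∈ (principalQuandle f).Dis := by
  obtain ⟨h, hh, hh1⟩ := hconn 1 g
  obtain ⟨g', rfl⟩ := Dis_le_range_toPermHom f hh
  obtain rfl : g' = g := by simpa using hh1
  exact hh

theorem rel_mul_left_iff (hconn : (principalQuandle f).IsConnected)
    {r : G → G → Prop} (hr : (principalQuandle f).IsCongruence r) (g x y : G) :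
    r (g * x) (g * y) ↔ r x y :=
  hr.apply_iff_of_mem_Dis (toPerm_mem_Dis hconn g) x y

theorem exists_subgroup_of_isCongruence (hconn : (principalQuandle f).IsConnected)
    {r : G → G → Prop} (hr : (principalQuandle f).IsCongruence r) :
    ∃ N : Subgroup G, ∀ a b, r a b ↔ a⁻¹ * b ∈ N :=
  Subgroup.exists_forall_iff_inv_mul_mem hr.equivalence
    fun g x y => (rel_mul_left_iff hconn hr g x y).2

theorem op_inv_mul_op_mem {N : Subgroup G} (hf : ∀ n ∈ N, f n ∈ N)
    (hc : ∀ n ∈ N, n * (f n)⁻¹ ∈ N.normalCore) {a b c d : G} (hab : a⁻¹ * b ∈ N)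
    (hcd : c⁻¹ * d ∈ N) :
    ((principalQuandle f).op a c)⁻¹ * (principalQuandle f).op b d ∈ N := by
  have key : ((principalQuandle f).op a c)⁻¹ * (principalQuandle f).op b d =
      (f (a⁻¹ * c))⁻¹ * ((a⁻¹ * b) * (f (a⁻¹ * b))⁻¹) * (f (a⁻¹ * c))⁻¹⁻¹ * f (c⁻¹ * d) := by
    change (a * f (a⁻¹ * c))⁻¹ * (b * f (b⁻¹ * d)) = _
    rw [show b⁻¹ * d = (a⁻¹ * b)⁻¹ * (a⁻¹ * c) * (c⁻¹ * d) by group]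
    simp only [map_mul, map_inv]
    group
  rw [key]
  exact N.mul_mem (hc _ hab _) (hf _ hcd)

theorem isCongruence_iff (N : Subgroup G) :
    (principalQuandle f).IsCongruence (fun a b => a⁻¹ * b ∈ N) ↔
      Subgroup.map f.toMonoidHom N = N ∧
        Subgroup.closure { x : G | ∃ n ∈ N, x = n * (f n)⁻¹ } ≤ N.normalCore := by
  rw [Subgroup.closure_le]
  constructor
  · intro hr
    have hf : ∀ n ∈ N, f n ∈ N := fun n hn => by
      simpa [principalQuandle] using
        hr.op_compat (c := 1) (d := n) (hr.refl 1) (by simpa using hn)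
    have hfs : ∀ n ∈ N, f.symm n ∈ N := fun n hn => by
      simpa [principalQuandle] using
        hr.invOp_compat (c := 1) (d := n) (hr.refl 1) (by simpa using hn)
    refine ⟨le_antisymm (Subgroup.map_le_iff_le_comap.2 hf)
      fun n hn => Subgroup.mem_map_equiv.2 (hfs n hn), ?_⟩
    rintro _ ⟨n, hn, rfl⟩ g
    -- `(1 ▷ c)⁻¹ (n ▷ c) = f(c)⁻¹ (n f(n)⁻¹) f(c)`, and `f(c) = g⁻¹` for `c = f⁻¹(g⁻¹)`
    have h := hr.op_compat (a := 1) (b := n) (by simpa using hn) (hr.refl (f.symm g⁻¹))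
    simp only [principalQuandle, map_mul, map_inv, MulEquiv.apply_symm_apply] at h
    simpa [mul_assoc] using h
  · rintro ⟨hmap, hc⟩
    have hf : ∀ n ∈ N, f n ∈ N := fun n hn => hmap ▸ Subgroup.mem_map_of_mem _ hn
    have hfs : ∀ n ∈ N, f.symm n ∈ N := fun n hn => Subgroup.mem_map_equiv.1 (hmap.symm ▸ hn)
    have hcs : ∀ n ∈ N, n * (f.symm n)⁻¹ ∈ N.normalCore := fun n hn => by
      simpa using N.normalCore.inv_mem (hc ⟨f.symm n, hfs n hn, rfl⟩)
    exact
      { refl := fun a => by simp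
        symm := fun h => by simpa using N.inv_mem h
        trans := fun h₁ h₂ => by simpa [mul_assoc] using N.mul_mem h₁ h₂
        op_compat := op_inv_mul_op_mem hf fun n hn => hc ⟨n, hn, rfl⟩
        invOp_compat := by
          rw [invOp_eq]
          exact op_inv_mul_op_mem (f := f.symm) hfs hcs }

end principalQuandle

/-- For a principal quandle `Q_Hom(G, f)` and a subgroup `N ≤ G` with
`f(N) = N` and `[N, f] ≤ Core_G(N)`, the relation `a ∼_N b ↔ a⁻¹b ∈ N` is a congruence;
conversely, if the quandle is connected, every congruence is of this form. -/
theorem statement8 {G : Type u} [Group G] (f : G ≃* G) :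
    (∀ N : Subgroup G, Subgroup.map f.toMonoidHom N = N →
      Subgroup.closure { x : G | ∃ n ∈ N, x = n * (f n)⁻¹ } ≤ N.normalCore →
      (principalQuandle f).IsCongruence (fun a b => a⁻¹ * b ∈ N)) ∧
    ((principalQuandle f).IsConnected →
      ∀ r : G → G → Prop, (principalQuandle f).IsCongruence r →
        ∃ N : Subgroup G, Subgroup.map f.toMonoidHom N = N ∧
          Subgroup.closure { x : G | ∃ n ∈ N, x = n * (f n)⁻¹ } ≤ N.normalCore ∧
          ∀ a b : G, r a b ↔ a⁻¹ * b ∈ N) := by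
  refine ⟨fun N hmap hcomm => (principalQuandle.isCongruence_iff N).2 ⟨hmap, hcomm⟩,
    fun hconn r hr => ?_⟩
  obtain ⟨N, hN⟩ := principalQuandle.exists_subgroup_of_isCongruence hconn hr
  obtain rfl : r = fun a b => a⁻¹ * b ∈ N := funext₂ fun a b => propext (hN a b)
  exact ⟨N, (principalQuandle.isCongruence_iff N).1 hr |>.1,
    (principalQuandle.isCongruence_iff N).1 hr |>.2, hN⟩
end

section
/- Let Q = Aff(A,f) be a connected affine quandle. Then the congruences of Q are exactly the relations ∼_N, where N ranges over the subgroups of A with f(N) = N and a ∼_N b iff a − b ∈ N. -/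
universe u v

/-!
In `Aff(A, f)` we have `L a ∘ (L b)⁻¹ : x ↦ x + (a - b) - f (a - b)`, so `Dis` consists of the
translations by elements of the image of `1 - f`, and connectedness says that `1 - f` is
surjective. Hence every translation is a composite `L d ∘ (L 0)⁻¹`, so every congruence is
translation invariant and is determined by the class `N` of `0`; since `L 0 = f`, this class
satisfies `f(N) = N`. Conversely `a - b ∈ N` is compatible with the affine operations as soon
as `N` is `f`-stable.
-/

section TranslationInvariant

variable {A : Type*} [AddCommGroup A] {r : A → A → Prop}

def Equivalence.zeroClassAddSubgroup (hr : Equivalence r)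
    (hadd : ∀ c x y, r x y → r (x + c) (y + c)) : AddSubgroup A where
  carrier := {x | r x 0}
  zero_mem' := hr.refl 0
  add_mem' {a b} ha hb := hr.trans (by simpa using hadd b a 0 ha) hb
  neg_mem' {a} ha := hr.symm (by simpa using hadd (-a) a 0 ha)

@[simp]
theorem Equivalence.mem_zeroClassAddSubgroup (hr : Equivalence r)
    (hadd : ∀ c x y, r x y → r (x + c) (y + c)) (x : A) :
    x ∈ hr.zeroClassAddSubgroup hadd ↔ r x 0 := Iff.rfl

theorem Equivalence.rel_iff_sub_mem_zeroClassAddSubgroup (hr : Equivalence r)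
    (hadd : ∀ c x y, r x y → r (x + c) (y + c)) (a b : A) :
    r a b ↔ a - b ∈ hr.zeroClassAddSubgroup hadd := by
  rw [hr.mem_zeroClassAddSubgroup]
  constructor
  · intro hab
    simpa [← sub_eq_add_neg] using hadd (-b) a b hab
  · intro hab
    simpa using hadd b (a - b) 0 hab

end TranslationInvariant

namespace affineQuandle

variable {A : Type u} [AddCommGroup A] (f : A ≃+ A)

@[simp]
theorem op_apply (a b : A) : (affineQuandle f).op a b = a - f a + f b := rfl

@[simp]
theorem invOp_apply (a b : A) : (affineQuandle f).invOp a b = f.symm (b - a + f a) := rfl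

theorem exists_eq_add_sub_of_mem_dis {g : Equiv.Perm A} (hg : g ∈ (affineQuandle f).Dis) :
    ∃ d : A, ∀ x, g x = x + (d - f d) := by
  induction hg using Subgroup.closure_induction with
  | mem g hg =>
    obtain ⟨a, b, rfl⟩ := hg
    refine ⟨a - b, fun x => ?_⟩
    change a - f a + f (f.symm (x - b + f b)) = _
    rw [f.apply_symm_apply, map_sub]
    abel
  | one => exact ⟨0, fun x => by simp⟩
  | mul g h _ _ hg hh =>
    obtain ⟨d, hd⟩ := hg
    obtain ⟨e, he⟩ := hh
    refine ⟨e + d, fun x => ?_⟩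
    rw [Equiv.Perm.mul_apply, he, hd, map_add]
    abel
  | inv g _ hg =>
    obtain ⟨d, hd⟩ := hg
    refine ⟨-d, fun x => g.injective ?_⟩
    change g (g.symm x) = _
    rw [g.apply_symm_apply, hd, map_neg]
    abel

variable {f}

theorem exists_sub_eq_of_isConnected (hc : (affineQuandle f).IsConnected) (c : A) :
    ∃ d : A, d - f d = c := by
  obtain ⟨g, hg, hg0⟩ := hc 0 c
  obtain ⟨d, hd⟩ := exists_eq_add_sub_of_mem_dis f hg
  exact ⟨d, by rw [← hg0, hd, zero_add]⟩

variable {r : A → A → Prop}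

theorem IsCongruence.add_right (hc : (affineQuandle f).IsConnected)
    (hr : (affineQuandle f).IsCongruence r) (c x y : A) (hxy : r x y) : r (x + c) (y + c) := by
  obtain ⟨d, rfl⟩ := exists_sub_eq_of_isConnected hc c
  have hL : ∀ z, (affineQuandle f).op d ((affineQuandle f).invOp 0 z) = z + (d - f d) := by
    intro z
    simp only [op_apply, invOp_apply, map_zero, add_zero, sub_zero, f.apply_symm_apply]
    abel
  simpa only [hL] using hr.op_compat (hr.refl d) (hr.invOp_compat (hr.refl 0) hxy)

theorem IsCongruence.apply_rel_zero (hr : (affineQuandle f).IsCongruence r) {x : A}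
    (hx : r x 0) : r (f x) 0 := by
  simpa using hr.op_compat (hr.refl 0) hx

theorem IsCongruence.symm_apply_rel_zero (hr : (affineQuandle f).IsCongruence r) {x : A}
    (hx : r x 0) : r (f.symm x) 0 := by
  simpa using hr.invOp_compat (hr.refl 0) hx

theorem isCongruence_sub_mem {N : AddSubgroup A} (hN : N.map f.toAddMonoidHom = N) :
    (affineQuandle f).IsCongruence (fun a b => a - b ∈ N) := by
  have hsymm : ∀ x, f.symm x ∈ N ↔ x ∈ N := fun x => by
    rw [← AddSubgroup.mem_map_equiv, hN]
  have hf : ∀ x, f x ∈ N ↔ x ∈ N := fun x => by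
    rw [← hsymm, f.symm_apply_apply]
  refine ⟨fun a => by simp, fun h => by simpa using neg_mem h,
    fun h₁ h₂ => by simpa using add_mem h₁ h₂, ?_, ?_⟩
  · intro a b c d hab hcd
    have key : a - f a + f c - (b - f b + f d) = (a - b) - f (a - b) + f (c - d) := by
      simp only [map_sub]
      abel
    simp only [op_apply, key]
    exact add_mem (sub_mem hab ((hf _).2 hab)) ((hf _).2 hcd)
  · intro a b c d hab hcd
    have key : c - a + f a - (d - b + f b) = (c - d) - (a - b) + f (a - b) := by
      simp only [map_sub]
      abel
    simp only [invOp_apply, ← map_sub, key, hsymm]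
    exact add_mem (sub_mem hcd hab) ((hf _).2 hab)

end affineQuandle

open affineQuandle in
/-- The congruences of a connected affine quandle `Aff(A, f)` are exactly
the relations `∼_N` (`a ∼_N b ↔ a - b ∈ N`) for `N` a subgroup of `A` with `f(N) = N`. -/
theorem statement9 {A : Type u} [AddCommGroup A] (f : A ≃+ A)
    (hc : (affineQuandle f).IsConnected) :
    ∀ r : A → A → Prop,
      (affineQuandle f).IsCongruence r ↔
        ∃ N : AddSubgroup A, AddSubgroup.map f.toAddMonoidHom N = N ∧
          ∀ a b : A, r a b ↔ a - b ∈ N := by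
  intro r
  constructor
  · intro hr
    have hequiv : Equivalence r := ⟨hr.refl, hr.symm, hr.trans⟩
    have hadd := IsCongruence.add_right hc hr
    refine ⟨hequiv.zeroClassAddSubgroup hadd, ?_,
      hequiv.rel_iff_sub_mem_zeroClassAddSubgroup hadd⟩
    ext x
    rw [AddSubgroup.mem_map_equiv, hequiv.mem_zeroClassAddSubgroup,
      hequiv.mem_zeroClassAddSubgroup]
    exact ⟨fun hx => by simpa using IsCongruence.apply_rel_zero hr hx,
      IsCongruence.symm_apply_rel_zero hr⟩
  · rintro ⟨N, hN, hrN⟩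
    obtain rfl : r = fun a b => a - b ∈ N := funext₂ fun a b => propext (hrN a b)
    exact isCongruence_sub_mem hN
end
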